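/- Consider a unison execution (cⁱ)_{i≥0} on a connected graph G. Let p be a node and i < j be indices such that cʲ(p) > cⁱ(p) + 2D, where D is the diameter of G. Then for every node q there exists h with i ≤ h < j such that cʰ(q) = cⁱ(p) + D and c^{h+1}(q) = cʰ(q) + 1. -/

import Mathlib

/-!
An edge whose endpoints' clocks differ by at least two blocks both endpoints, so it stays
desynchronized and its endpoints are frozen forever; conversely, synchronized edges stay
synchronized. Along an edge the advance of a clock exceeds that of its neighbour by at most two,
so if some clock advances by more than `2D`, no edge is desynchronized. Then neighbouring clocks
differ by at most one, hence any two clocks by at most `D`: at time `i` every clock is at most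
`cⁱ(p) + D`, at time `j` every clock exceeds it, and a clock moving in unit steps has to
increment at that value in between.
-/

lemma exists_eq_and_succ_eq_add_one_of_le_of_lt {f : ℕ → ℤ}
    (hf : ∀ n, f (n + 1) = f n ∨ f (n + 1) = f n + 1) {i j : ℕ} {k : ℤ}
    (hi : f i ≤ k) (hj : k < f j) :
    ∃ h, i ≤ h ∧ h < j ∧ f h = k ∧ f (h + 1) = f h + 1 := by
  have hij : i ≤ j := by
    by_contra! hji
    have := monotone_nat_of_le_succ (f := f) (fun n => by rcases hf n with h | h <;> omega) hji.le
    omega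
  induction j, hij using Nat.le_induction with
  | base => omega
  | succ j hij ih =>
    by_cases hk : k < f j
    · obtain ⟨h, hih, hhj, hfh⟩ := ih hk
      exact ⟨h, hih, by omega, hfh⟩
    · rcases hf j with h | h
      · omega
      · exact ⟨j, hij, by omega, by omega, h⟩

namespace SimpleGraph

variable {V : Type*} {G : SimpleGraph V}

lemma Connected.dist_le_diam [Finite V] (hG : G.Connected) (u v : V) : G.dist u v ≤ G.diam :=
  have := hG.nonempty
  G.dist_le_diam (G.connected_iff_ediam_ne_top.mp hG)

lemma Walk.abs_sub_le_length {f : V → ℤ} (hf : ∀ u v, G.Adj u v → |f u - f v| ≤ 1) {u v : V}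
    (W : G.Walk u v) : |f u - f v| ≤ W.length := by
  induction W with
  | nil => simp
  | @cons u x v hux W ih =>
    rw [Walk.length_cons]
    push_cast
    linarith [abs_sub_le (f u) (f x) (f v), hf u x hux]

lemma Connected.abs_sub_le_diam [Finite V] (hG : G.Connected) {f : V → ℤ}
    (hf : ∀ u v, G.Adj u v → |f u - f v| ≤ 1) (u v : V) : |f u - f v| ≤ G.diam := by
  obtain ⟨W, hW⟩ := hG.exists_walk_length_eq_dist u v
  calc |f u - f v| ≤ W.length := W.abs_sub_le_length hf
    _ ≤ G.diam := by rw [hW]; exact_mod_cast hG.dist_le_diam u v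

/-- `c t p` is the clock of node `p` at time `t`. -/
structure IsUnisonExecution (G : SimpleGraph V) (c : ℕ → V → ℤ) : Prop where
  step : ∀ t p, c (t + 1) p = c t p ∨ c (t + 1) p = c t p + 1
  guard : ∀ t p, c (t + 1) p = c t p + 1 → ∀ q, G.Adj p q → c t q = c t p ∨ c t q = c t p + 1

namespace IsUnisonExecution

variable {c : ℕ → V → ℤ}

lemma monotone (hc : G.IsUnisonExecution c) (q : V) : Monotone (c · q) :=
  monotone_nat_of_le_succ fun t => by rcases hc.step t q with h | h <;> omega

lemma apply_succ_eq_of_one_lt_abs (hc : G.IsUnisonExecution c) {u v : V} (huv : G.Adj u v)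
    {t : ℕ} (h : 1 < |c t u - c t v|) : c (t + 1) u = c t u := by
  rcases hc.step t u with hu | hu
  · exact hu
  · have := hc.guard t u hu v huv
    rw [lt_abs] at h
    omega

lemma one_lt_abs_succ (hc : G.IsUnisonExecution c) {u v : V} (huv : G.Adj u v) {t : ℕ}
    (h : 1 < |c t u - c t v|) : 1 < |c (t + 1) u - c (t + 1) v| := by
  rwa [hc.apply_succ_eq_of_one_lt_abs huv h,
    hc.apply_succ_eq_of_one_lt_abs huv.symm (by rwa [abs_sub_comm])]

lemma abs_succ_le_one (hc : G.IsUnisonExecution c) {u v : V} (huv : G.Adj u v) {t : ℕ}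
    (h : |c t u - c t v| ≤ 1) : |c (t + 1) u - c (t + 1) v| ≤ 1 := by
  rw [abs_le] at h ⊢
  rcases hc.step t u with hu | hu <;> rcases hc.step t v with hv | hv
  · omega
  · have := hc.guard t v hv u huv.symm
    omega
  · have := hc.guard t u hu v huv
    omega
  · omega

lemma one_lt_abs_of_le (hc : G.IsUnisonExecution c) {u v : V} (huv : G.Adj u v) {s t : ℕ}
    (hst : s ≤ t) (h : 1 < |c s u - c s v|) : 1 < |c t u - c t v| := by
  induction t, hst using Nat.le_induction with
  | base => exact h
  | succ t _ ih => exact hc.one_lt_abs_succ huv ih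

lemma abs_le_one_of_le (hc : G.IsUnisonExecution c) {u v : V} (huv : G.Adj u v) {s t : ℕ}
    (hst : s ≤ t) (h : |c s u - c s v| ≤ 1) : |c t u - c t v| ≤ 1 := by
  induction t, hst using Nat.le_induction with
  | base => exact h
  | succ t _ ih => exact hc.abs_succ_le_one huv ih

lemma apply_eq_of_one_lt_abs (hc : G.IsUnisonExecution c) {u v : V} (huv : G.Adj u v)
    {s t : ℕ} (hst : s ≤ t) (h : 1 < |c s u - c s v|) : c t u = c s u := by
  induction t, hst using Nat.le_induction with
  | base => rfl
  | succ t hst ih => rw [hc.apply_succ_eq_of_one_lt_abs huv (hc.one_lt_abs_of_le huv hst h), ih]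

lemma sub_le_sub_add_two_mul_length (hc : G.IsUnisonExecution c) {s t : ℕ} (hst : s ≤ t)
    {w a : V} (W : G.Walk w a) : c t w - c s w ≤ c t a - c s a + 2 * W.length := by
  induction W with
  | nil => simp
  | @cons w x a hwx W ih =>
    rw [Walk.length_cons]
    push_cast
    have hx : c s x ≤ c t x := hc.monotone x hst
    rcases le_or_gt |c s w - c s x| 1 with hsync | hdesync
    · have := abs_le.mp hsync
      have := abs_le.mp (hc.abs_le_one_of_le hwx hst hsync)
      omega
    · have := hc.apply_eq_of_one_lt_abs hwx hst hdesync
      omega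

lemma sub_le_two_mul_diam_of_one_lt_abs [Finite V] (hc : G.IsUnisonExecution c)
    (hG : G.Connected) {u v : V} (huv : G.Adj u v) {s t : ℕ} (hst : s ≤ t)
    (h : 1 < |c s u - c s v|) (p : V) : c t p - c s p ≤ 2 * G.diam := by
  obtain ⟨W, hW⟩ := hG.exists_walk_length_eq_dist p u
  have hadv := hc.sub_le_sub_add_two_mul_length hst W
  rw [hc.apply_eq_of_one_lt_abs huv hst h, hW] at hadv
  have : (G.dist p u : ℤ) ≤ G.diam := by exact_mod_cast hG.dist_le_diam p u
  omega

end IsUnisonExecution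

end SimpleGraph

theorem stmt8 {V : Type*} [Fintype V] (G : SimpleGraph V) (hG : G.Connected)
    (c : ℕ → V → ℤ)
    (hstep : ∀ i (p : V), c (i + 1) p = c i p ∨ c (i + 1) p = c i p + 1)
    (hguard : ∀ i (p : V), c (i + 1) p = c i p + 1 →
      ∀ q : V, G.Adj p q → c i q = c i p ∨ c i q = c i p + 1)
    (p : V) (i j : ℕ) (hij : i < j)
    (hbig : c j p > c i p + 2 * G.diam) :
    ∀ q : V, ∃ h : ℕ, i ≤ h ∧ h < j ∧
      c h q = c i p + G.diam ∧ c (h + 1) q = c h q + 1 := by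
  intro q
  have hc : G.IsUnisonExecution c := ⟨hstep, hguard⟩
  have hsync : ∀ t, i ≤ t → ∀ u v, G.Adj u v → |c t u - c t v| ≤ 1 := by
    intro t hit u v huv
    refine hc.abs_le_one_of_le huv hit (not_lt.mp fun hdesync => ?_)
    have := hc.sub_le_two_mul_diam_of_one_lt_abs hG huv hij.le hdesync p
    omega
  have hi := abs_le.mp (hG.abs_sub_le_diam (hsync i le_rfl) p q)
  have hj := abs_le.mp (hG.abs_sub_le_diam (hsync j hij.le) p q)
  obtain ⟨h, hih, hhj, hq⟩ := exists_eq_and_succ_eq_add_one_of_le_of_lt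
    (f := (c · q)) (hc.step · q) (i := i) (j := j) (k := c i p + G.diam) (by omega) (by omega)
  exact ⟨h, hih, hhj, hq⟩
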